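/- Let X be a Banach space and {U_σ(t,τ)}, σ ∈ Σ, a family of processes on X that satisfies the translation identity with respect to a translation semigroup on Σ and has a bounded uniformly (w.r.t. σ ∈ Σ) absorbing set B₀ ⊂ X. Assume that for every ε > 0 there exist T = T(B₀, ε) > 0 and a contractive function φ_T on B₀ × B₀ such that ‖U_{σ₁}(T,0)x − U_{σ₂}(T,0)y‖ ≤ ε + φ_T(x, y; σ₁, σ₂) for all x, y ∈ B₀ and all σ₁, σ₂ ∈ Σ. Then the family {U_σ(t,τ)}, σ ∈ Σ, is uniformly (w.r.t. σ ∈ Σ) asymptotically compact in X. -/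
import Mathlib


open Filter Topology Metric Set

/-- A family of processes `U σ t τ : X → X` (defined for `t ≥ τ`). -/
def IsProcessFamily {X : Type*} {S : Type*} (U : S → ℝ → ℝ → X → X) : Prop :=
  (∀ (σ : S) (τ : ℝ) (x : X), U σ τ τ x = x) ∧
  (∀ (σ : S) (t s τ : ℝ), τ ≤ s → s ≤ t → ∀ x : X, U σ t s (U σ s τ x) = U σ t τ x)

/-- Translation identity w.r.t. the translation semigroup `Tr` on the symbol space. -/
def TranslationIdentity {X : Type*} {S : Type*} (U : S → ℝ → ℝ → X → X)
    (Tr : ℝ → S → S) : Prop :=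
  (∀ (σ : S) (t τ s : ℝ), τ ≤ t → 0 ≤ s → ∀ x : X,
      U σ (t + s) (τ + s) x = U (Tr s σ) t τ x) ∧
  (∀ s : ℝ, 0 ≤ s → Function.Surjective (Tr s))

/-- `B₀` is a bounded uniformly (w.r.t. `σ ∈ Σ`) absorbing set. -/
def BoundedUniformlyAbsorbing {X : Type*} {S : Type*} [PseudoMetricSpace X]
    (U : S → ℝ → ℝ → X → X) (B₀ : Set X) : Prop :=
  Bornology.IsBounded B₀ ∧
  ∀ (τ : ℝ) (B : Set X), Bornology.IsBounded B →
    ∃ T₀ : ℝ, ∀ t ≥ T₀, ∀ σ : S, ∀ x ∈ B, U σ t τ x ∈ B₀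

/-- Uniform (w.r.t. `σ ∈ Σ`) asymptotic compactness. -/
def UniformlyAsympCompact {X : Type*} {S : Type*} [PseudoMetricSpace X]
    (U : S → ℝ → ℝ → X → X) : Prop :=
  ∀ (τ : ℝ) (u : ℕ → X) (σ : ℕ → S) (t : ℕ → ℝ),
    Bornology.IsBounded (Set.range u) → (∀ n, τ ≤ t n) → Tendsto t atTop atTop →
    ∃ (φ : ℕ → ℕ) (x : X), StrictMono φ ∧
      Tendsto (fun n => U (σ (φ n)) (t (φ n)) τ (u (φ n))) atTop (𝓝 x)

/-- `φ` is a contractive function on `B × B`: for any sequences `xₙ ∈ B` and `σₙ ∈ Σ`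
there exist subsequences (indexed by a strictly monotone `ψ`) such that the iterated
limit `lim_{k→∞} lim_{l→∞} φ(x_{ψ k}, x_{ψ l}; σ_{ψ k}, σ_{ψ l})` exists and equals `0`. -/
def ContractiveOn {X : Type*} {S : Type*}
    (φ : X → X → S → S → ℝ) (B : Set X) : Prop :=
  ∀ (x : ℕ → X) (σ : ℕ → S), (∀ n, x n ∈ B) →
    ∃ ψ : ℕ → ℕ, StrictMono ψ ∧ ∃ a : ℕ → ℝ,
      (∀ k, Tendsto (fun l => φ (x (ψ k)) (x (ψ l)) (σ (ψ k)) (σ (ψ l)))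
        atTop (𝓝 (a k))) ∧
      Tendsto a atTop (𝓝 0)

lemma cauchy_subseq_of_pairwise {X : Type*} [PseudoMetricSpace X] (v : ℕ → X)
    (h : ∀ ε : ℝ, 0 < ε → ∀ s : ℕ → ℕ, StrictMono s →
      ∃ ψ : ℕ → ℕ, StrictMono ψ ∧ ∀ k l, dist (v (s (ψ k))) (v (s (ψ l))) ≤ ε) :
    ∃ g : ℕ → ℕ, StrictMono g ∧ CauchySeq (v ∘ g) := by
  choose! Ψ h1 h2 using h
  have hpos : ∀ m : ℕ, (0:ℝ) < 1/((m:ℝ)+1) := by intro m; positivity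
  set F : ℕ → ℕ → ℕ := fun m =>
    Nat.rec (motive := fun _ => ℕ → ℕ) id
      (fun m fm => fm ∘ Ψ (1/((m:ℝ)+1)) fm) m with hF
  have hFs : ∀ m, F (m+1) = F m ∘ Ψ (1/((m:ℝ)+1)) (F m) := fun m => rfl
  have hmono : ∀ m, StrictMono (F m) := by
    intro m
    induction m with
    | zero => exact strictMono_id
    | succ m ih => rw [hFs]; exact ih.comp (h1 _ (hpos m) _ ih)
  have hbd : ∀ m k l, dist (v (F (m+1) k)) (v (F (m+1) l)) ≤ 1/((m:ℝ)+1) := by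
    intro m k l
    rw [hFs m]
    exact h2 _ (hpos m) _ (hmono m) k l
  have hfac : ∀ m d, ∃ hm : ℕ → ℕ, F (m + d) = F m ∘ hm := by
    intro m d
    induction d with
    | zero => exact ⟨id, rfl⟩
    | succ d ih =>
      obtain ⟨hm, hhm⟩ := ih
      refine ⟨hm ∘ Ψ (1/(((m+d:ℕ):ℝ)+1)) (F (m+d)), ?_⟩
      rw [show m + (d+1) = (m+d)+1 from rfl, hFs, hhm]
      rfl
  refine ⟨fun m => F m m, ?_, ?_⟩
  · apply strictMono_nat_of_lt_succ
    intro m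
    have hle : m + 1 ≤ Ψ (1/((m:ℝ)+1)) (F m) (m+1) :=
      (h1 _ (hpos m) _ (hmono m)).le_apply
    calc F m m < F m (Ψ (1/((m:ℝ)+1)) (F m) (m+1)) :=
          hmono m (lt_of_lt_of_le (Nat.lt_succ_self m) hle)
      _ = F (m+1) (m+1) := rfl
  · rw [Metric.cauchySeq_iff']
    intro ε hε
    obtain ⟨M, hM⟩ := exists_nat_one_div_lt hε
    refine ⟨M + 1, ?_⟩
    intro n hn
    obtain ⟨hm, hhm⟩ := hfac (M + 1) (n - (M + 1))
    have hn' : (M + 1) + (n - (M + 1)) = n := by omega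
    rw [hn'] at hhm
    have : dist (v (F n n)) (v (F (M+1) (M+1))) ≤ 1/((M:ℝ)+1) := by
      rw [hhm]
      exact hbd M (hm n) (M+1)
    calc dist ((v ∘ fun m => F m m) n) ((v ∘ fun m => F m m) (M+1))
        = dist (v (F n n)) (v (F (M+1) (M+1))) := rfl
      _ ≤ 1/((M:ℝ)+1) := this
      _ < ε := by exact_mod_cast hM


/-- Criterion for uniform asymptotic compactness: if the family of processes satisfies
the translation identity, has a bounded uniformly absorbing set `B₀`, and for every
`ε > 0` there exist `T = T(B₀,ε) > 0` and a contractive function `φ_T` on `B₀ × B₀`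
with `‖U_{σ₁}(T,0)x − U_{σ₂}(T,0)y‖ ≤ ε + φ_T(x,y;σ₁,σ₂)` for all `x, y ∈ B₀` and all
`σ₁, σ₂ ∈ Σ`, then the family is uniformly asymptotically compact. -/
theorem uniformly_asymp_compact_of_contractive {X S : Type*}
    [NormedAddCommGroup X] [NormedSpace ℝ X] [CompleteSpace X]
    (U : S → ℝ → ℝ → X → X) (Tr : ℝ → S → S)
    (hU : IsProcessFamily U) (hTI : TranslationIdentity U Tr)
    (B₀ : Set X) (hB₀ : BoundedUniformlyAbsorbing U B₀)
    (hcontr : ∀ ε : ℝ, 0 < ε → ∃ T : ℝ, 0 < T ∧ ∃ φ : X → X → S → S → ℝ,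
      ContractiveOn φ B₀ ∧ ∀ x ∈ B₀, ∀ y ∈ B₀, ∀ σ₁ σ₂ : S,
        ‖U σ₁ T 0 x - U σ₂ T 0 y‖ ≤ ε + φ x y σ₁ σ₂) :
    UniformlyAsympCompact U := by
  obtain ⟨hU1, hU2⟩ := hU
  obtain ⟨hTI1, hTI2⟩ := hTI
  obtain ⟨hB₀1, hB₀2⟩ := hB₀
  intro τ u σ t hu ht htend
  set v : ℕ → X := fun n => U (σ n) (t n) τ (u n) with hv
  have hpair : ∀ ε : ℝ, 0 < ε → ∀ s : ℕ → ℕ, StrictMono s →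
      ∃ ψ : ℕ → ℕ, StrictMono ψ ∧ ∀ k l, dist (v (s (ψ k))) (v (s (ψ l))) ≤ ε := by
    intro ε hε s hs
    obtain ⟨T, hT, φ, hφc, hφb⟩ := hcontr (ε/2) (by linarith)
    obtain ⟨T₀, hT₀⟩ := hB₀2 τ (Set.range u) hu
    have hts : Tendsto (fun n => t (s n)) atTop atTop := htend.comp hs.tendsto_atTop
    obtain ⟨N, hN⟩ := eventually_atTop.1
      (hts.eventually_ge_atTop (T + max T₀ (max τ 0)))
    set idx : ℕ → ℕ := fun n => s (N + n) with hidx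
    set r : ℕ → ℝ := fun n => t (idx n) - T with hr
    have hM : ∀ n, T + max T₀ (max τ 0) ≤ t (idx n) := fun n => hN (N + n) (Nat.le_add_right N n)
    have hmaxr : ∀ n, max T₀ (max τ 0) ≤ r n := by
      intro n; have := hM n; simp only [hr]; linarith
    have hrT₀ : ∀ n, T₀ ≤ r n := fun n => le_trans (le_max_left _ _) (hmaxr n)
    have hrτ : ∀ n, τ ≤ r n := fun n => le_trans ((le_max_left τ 0).trans (le_max_right _ _)) (hmaxr n)
    have hr0 : ∀ n, (0:ℝ) ≤ r n := fun n => le_trans ((le_max_right τ 0).trans (le_max_right _ _)) (hmaxr n)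
    have hrt : ∀ n, r n ≤ t (idx n) := by intro n; simp only [hr]; linarith
    set w : ℕ → X := fun n => U (σ (idx n)) (r n) τ (u (idx n)) with hw
    set σ' : ℕ → S := fun n => Tr (r n) (σ (idx n)) with hσ'
    have hwB : ∀ n, w n ∈ B₀ := fun n => hT₀ (r n) (hrT₀ n) _ _ ⟨idx n, rfl⟩
    have hvw : ∀ n, v (idx n) = U (σ' n) T 0 (w n) := by
      intro n
      have h1 : U (σ (idx n)) (t (idx n)) (r n) (w n) = v (idx n) :=
        hU2 _ _ _ _ (hrτ n) (hrt n) _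
      have h2 : U (σ (idx n)) (T + r n) (0 + r n) (w n) = U (σ' n) T 0 (w n) :=
        hTI1 _ _ _ _ hT.le (hr0 n) _
      have e1 : T + r n = t (idx n) := by simp only [hr]; ring
      rw [e1, zero_add] at h2
      rw [← h1]; exact h2
    have hdist : ∀ n m, dist (v (idx n)) (v (idx m)) ≤ ε/2 + φ (w n) (w m) (σ' n) (σ' m) := by
      intro n m
      rw [hvw n, hvw m, dist_eq_norm]
      exact hφb _ (hwB n) _ (hwB m) _ _
    obtain ⟨ψ₀, hψ₀, a, ha, ha0⟩ := hφc w σ' hwB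
    obtain ⟨K, hK⟩ := eventually_atTop.1 ((tendsto_order.1 ha0).2 (ε/4) (by linarith))
    have hEv : ∀ k, ∃ L, ∀ l ≥ L,
        φ (w (ψ₀ k)) (w (ψ₀ l)) (σ' (ψ₀ k)) (σ' (ψ₀ l)) < a k + ε/4 := fun k =>
      eventually_atTop.1 ((tendsto_order.1 (ha k)).2 (a k + ε/4) (by linarith))
    choose L hL using hEv
    set c : ℕ → ℕ := fun j => Nat.rec (motive := fun _ => ℕ) K
      (fun _ p => max (p+1) (L p)) j with hc
    have hcs : ∀ j, c (j+1) = max (c j + 1) (L (c j)) := fun j => rfl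
    have hcmono : StrictMono c := by
      apply strictMono_nat_of_lt_succ
      intro j
      rw [hcs j]
      exact lt_of_lt_of_le (Nat.lt_succ_self _) (le_max_left _ _)
    have hcK : ∀ j, K ≤ c j := fun j => hcmono.monotone (Nat.zero_le j)
    have hcL : ∀ i j, i < j → L (c i) ≤ c j := by
      intro i j hij
      have h1 : c (i+1) ≤ c j := hcmono.monotone hij
      rw [hcs i] at h1
      exact le_trans (le_max_right _ _) h1
    have key : ∀ i j, i < j → dist (v (idx (ψ₀ (c i)))) (v (idx (ψ₀ (c j)))) ≤ ε := by
      intro i j hij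
      have h1 := hL (c i) (c j) (hcL i j hij)
      have h2 := hK (c i) (hcK i)
      have h3 := hdist (ψ₀ (c i)) (ψ₀ (c j))
      linarith
    refine ⟨fun j => N + ψ₀ (c j), ?_, ?_⟩
    · intro i j hij
      exact Nat.add_lt_add_left (hψ₀ (hcmono hij)) N
    · intro k l
      rcases lt_trichotomy k l with hkl | hkl | hkl
      · exact key k l hkl
      · subst hkl; simp only [dist_self]; linarith
      · rw [dist_comm]; exact key l k hkl
  obtain ⟨g, hg, hcauchy⟩ := cauchy_subseq_of_pairwise v hpair
  obtain ⟨x, hx⟩ := cauchySeq_tendsto_of_complete hcauchy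
  exact ⟨g, x, hg, hx⟩
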